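/- Let P < Q be p-subgroups of the finite group G, let g ∈ G normalize both P and Q, and suppose Φ(Q) is not contained in P. Then: (1) P ⊔ Φ(Q) is a p-subgroup of G normalized by g with P < P ⊔ Φ(Q) < Q, i.e. P ⊔ Φ(Q) lies in the open interval (P,Q)_g = {R : P < R < Q, R a p-subgroup of G, g ∈ N_G(R)}; (2) for every R ∈ (P,Q)_g, the subgroup R ⊔ Φ(Q) again lies in (P,Q)_g; and (3) for every R ∈ (P,Q)_g one has R ≤ R ⊔ Φ(Q) and P ⊔ Φ(Q) ≤ R ⊔ Φ(Q). (These data constitute the conical contraction of (P,Q)_g used to prove that μ_g(P,Q) = 0 when Φ(Q) ≰ P.) -/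

import Mathlib

/-!
The Frattini subgroup `Φ(Q)` is characteristic in `Q`, so whatever normalizes `Q` normalizes
`Φ(Q)`, hence normalizes `R ⊔ Φ(Q)` whenever it normalizes `R`. Since `Φ(Q)` consists of
non-generators of `Q`, a proper subgroup `R < Q` stays proper after adjoining `Φ(Q)`, and
`R ⊔ Φ(Q) ≤ Q` is a `p`-group because `Q` is.
-/

/-- Frattini subgroup of `Q`, regarded as a subgroup of `G`. -/
def frattiniIn {G : Type*} [Group G] (Q : Subgroup G) : Subgroup G :=
  (frattini ↥Q).map Q.subtype

open Subgroup

theorem Subgroup.sup_frattini_lt_top {G : Type*} [Group G] [IsCoatomic (Subgroup G)]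
    {K : Subgroup G} (hK : K < ⊤) : K ⊔ frattini G < ⊤ :=
  lt_top_iff_ne_top.mpr fun h => hK.ne (frattini_nongenerating h)

theorem Subgroup.map_subtype_mem_normalizer_of_characteristic {G : Type*} [Group G]
    {H : Subgroup G} {K : Subgroup H} [hK : K.Characteristic] {g : G}
    (hg : g ∈ normalizer (H : Set G)) : g ∈ normalizer ((K.map H.subtype : Subgroup G) : Set G) := by
  have hconj : ((MulAut.conj g : G ≃* G) : G →* G).comp H.subtype =
      H.subtype.comp (H.normalizerMonoidHom ⟨g, hg⟩ : H →* H) := rfl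
  rw [mem_normalizer_iff_map_conj_eq, map_map, hconj, ← map_map]
  exact congrArg (map H.subtype) (characteristic_iff_map_eq.mp hK _)

section frattiniIn

variable {G : Type*} [Group G]

theorem mem_normalizer_frattiniIn {Q : Subgroup G} {g : G} (hg : g ∈ normalizer (Q : Set G)) :
    g ∈ normalizer ((frattiniIn Q : Subgroup G) : Set G) :=
  map_subtype_mem_normalizer_of_characteristic hg

theorem sup_frattiniIn_lt {Q : Subgroup G} [IsCoatomic (Subgroup Q)] {R : Subgroup G}
    (h : R < Q) : R ⊔ frattiniIn Q < Q := by
  obtain ⟨R', rfl⟩ : ∃ R' : Subgroup Q, R'.map Q.subtype = R :=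
    ⟨R.subgroupOf Q, by rw [subgroupOf_map_subtype, inf_of_le_left h.le]⟩
  have map_lt_iff (K : Subgroup Q) : K.map Q.subtype < Q ↔ K < ⊤ :=
    calc K.map Q.subtype < Q ↔ K.map Q.subtype < (⊤ : Subgroup Q).map Q.subtype := by
          rw [← MonoidHom.range_eq_map, range_subtype]
      _ ↔ K < ⊤ := map_subtype_lt_map_subtype
  rw [frattiniIn, ← Subgroup.map_sup, map_lt_iff]
  exact sup_frattini_lt_top ((map_lt_iff R').mp h)

end frattiniIn

theorem stmt3_general {G : Type*} [Group G] [Finite G] (p : ℕ)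
    (P Q : Subgroup G) (hQ : IsPGroup p Q) (hPQ : P < Q)
    (g : G) (hgP : g ∈ Subgroup.normalizer (P : Set G)) (hgQ : g ∈ Subgroup.normalizer (Q : Set G))
    (hFrat : ¬ frattiniIn Q ≤ P) :
    (IsPGroup p (P ⊔ frattiniIn Q : Subgroup G) ∧ g ∈ Subgroup.normalizer ((P ⊔ frattiniIn Q : Subgroup G) : Set G) ∧
        P < P ⊔ frattiniIn Q ∧ P ⊔ frattiniIn Q < Q) ∧
    (∀ R : Subgroup G, IsPGroup p R → g ∈ Subgroup.normalizer (R : Set G) → P < R → R < Q →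
      IsPGroup p (R ⊔ frattiniIn Q : Subgroup G) ∧ g ∈ Subgroup.normalizer ((R ⊔ frattiniIn Q : Subgroup G) : Set G) ∧
        P < R ⊔ frattiniIn Q ∧ R ⊔ frattiniIn Q < Q) ∧
    (∀ R : Subgroup G, IsPGroup p R → g ∈ Subgroup.normalizer (R : Set G) → P < R → R < Q →
      R ≤ R ⊔ frattiniIn Q ∧ P ⊔ frattiniIn Q ≤ R ⊔ frattiniIn Q) := by
  have contract : ∀ R : Subgroup G, g ∈ normalizer (R : Set G) → R < Q →
      IsPGroup p (R ⊔ frattiniIn Q : Subgroup G) ∧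
        g ∈ normalizer ((R ⊔ frattiniIn Q : Subgroup G) : Set G) ∧ R ⊔ frattiniIn Q < Q :=
    fun R hgR hRQ => ⟨hQ.to_le (sup_frattiniIn_lt hRQ).le,
      normalizer_inf_normalizer_le_normalizer_sup _ _ ⟨hgR, mem_normalizer_frattiniIn hgQ⟩,
      sup_frattiniIn_lt hRQ⟩
  refine ⟨?_, fun R _ hgR hPR hRQ => ?_, fun R _ _ hPR _ => ⟨le_sup_left, sup_le_sup_right hPR.le _⟩⟩
  · obtain ⟨hp, hg, hlt⟩ := contract P hgP hPQ
    exact ⟨hp, hg, left_lt_sup.mpr hFrat, hlt⟩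
  · obtain ⟨hp, hg, hlt⟩ := contract R hgR hRQ
    exact ⟨hp, hg, hPR.trans_le le_sup_left, hlt⟩

theorem stmt3 {G : Type*} [Group G] [Finite G] (p : ℕ) [Fact p.Prime]
    (P Q : Subgroup G) (hP : IsPGroup p P) (hQ : IsPGroup p Q) (hPQ : P < Q)
    (g : G) (hgP : g ∈ Subgroup.normalizer (P : Set G)) (hgQ : g ∈ Subgroup.normalizer (Q : Set G))
    (hFrat : ¬ frattiniIn Q ≤ P) :
    (IsPGroup p (P ⊔ frattiniIn Q : Subgroup G) ∧ g ∈ Subgroup.normalizer ((P ⊔ frattiniIn Q : Subgroup G) : Set G) ∧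
        P < P ⊔ frattiniIn Q ∧ P ⊔ frattiniIn Q < Q) ∧
    (∀ R : Subgroup G, IsPGroup p R → g ∈ Subgroup.normalizer (R : Set G) → P < R → R < Q →
      IsPGroup p (R ⊔ frattiniIn Q : Subgroup G) ∧ g ∈ Subgroup.normalizer ((R ⊔ frattiniIn Q : Subgroup G) : Set G) ∧
        P < R ⊔ frattiniIn Q ∧ R ⊔ frattiniIn Q < Q) ∧
    (∀ R : Subgroup G, IsPGroup p R → g ∈ Subgroup.normalizer (R : Set G) → P < R → R < Q →
      R ≤ R ⊔ frattiniIn Q ∧ P ⊔ frattiniIn Q ≤ R ⊔ frattiniIn Q) :=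
  stmt3_general p P Q hQ hPQ g hgP hgQ hFrat
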